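/- On ⨂[ℂ]^3 V, define S₁₂ := (1/2 : ℂ) • (LinearMap.id + P_{(12)}) and A₂₃ := (1/2 : ℂ) • (LinearMap.id - P_{(23)}), where (12) and (23) are the transpositions swapping the indicated factors. Then the trace of the operator (4/3 : ℂ) • (S₁₂ ∘ₗ A₂₃ ∘ₗ S₁₂) equals N(N² − 1)/3, i.e. LinearMap.trace ℂ (⨂[ℂ]^3 V) ((4/3 : ℂ) • (S₁₂ ∘ₗ A₂₃ ∘ₗ S₁₂)) = ((N : ℂ) * ((N : ℂ)^2 - 1)) / 3. (This is the norm-squared of the corresponding mixed-symmetry MOLD singlet state, giving the normalization χ₂ = 3/(N(N²−1)).) -/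

import Mathlib

open scoped TensorProduct

/-- The permutation operator `P_σ` on the `m`-fold tensor power of `V = Fin N → ℂ`,
sending `v₁ ⊗ ⋯ ⊗ v_m` to `v_{σ⁻¹(1)} ⊗ ⋯ ⊗ v_{σ⁻¹(m)}`. -/
noncomputable def permOp (N m : ℕ) (σ : Equiv.Perm (Fin m)) :
    (⨂[ℂ] _ : Fin m, (Fin N → ℂ)) →ₗ[ℂ] ⨂[ℂ] _ : Fin m, (Fin N → ℂ) :=
  (PiTensorProduct.reindex ℂ (fun _ : Fin m => (Fin N → ℂ)) σ).toLinearMap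

/-- The symmetrizer `S₁₂` over the first two factors of `V^{⊗3}`. -/
noncomputable def S12 (N : ℕ) :
    (⨂[ℂ] _ : Fin 3, (Fin N → ℂ)) →ₗ[ℂ] ⨂[ℂ] _ : Fin 3, (Fin N → ℂ) :=
  (1 / 2 : ℂ) • (LinearMap.id + permOp N 3 (Equiv.swap 0 1))

/-- The antisymmetrizer `A₂₃` over the last two factors of `V^{⊗3}`. -/
noncomputable def A23 (N : ℕ) :
    (⨂[ℂ] _ : Fin 3, (Fin N → ℂ)) →ₗ[ℂ] ⨂[ℂ] _ : Fin 3, (Fin N → ℂ) :=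
  (1 / 2 : ℂ) • (LinearMap.id - permOp N 3 (Equiv.swap 1 2))

/-!
`P₁₂² = 1` makes `S₁₂` idempotent, so by cyclicity of the trace
`tr (S₁₂ A₂₃ S₁₂) = tr (A₂₃ S₁₂) = ¼ tr (1 + P₁₂ - P₂₃ - P₂₃ P₁₂)`.
On the basis of elementary tensors of standard basis vectors, indexed by `f : Fin m → Fin N`,
`P_σ` sends the basis vector of `f` to that of `f ∘ σ⁻¹`, so `tr P_σ` counts the `f` with
`f ∘ σ = f`: `N³` for the identity, `N²` for a transposition and `N` for a 3-cycle.
-/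

open Equiv

section FixedFunctions

variable {α β : Type*}

theorem Equiv.Perm.SameCycle.apply_eq_of_comp_eq_self [Finite α] {σ : Perm α} {x y : α}
    (hxy : σ.SameCycle x y) {f : α → β} (hf : f ∘ σ = f) : f x = f y := by
  obtain ⟨n, rfl⟩ := hxy.exists_nat_pow_eq
  clear hxy
  induction n with
  | zero => rfl
  | succ n ih => rw [pow_succ', Perm.mul_apply, ih]; exact (congrFun hf _).symm

variable [DecidableEq α]

theorem comp_swap_eq_self_iff {i j : α} (f : α → β) : f ∘ swap i j = f ↔ f i = f j := by
  constructor
  · intro h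
    simpa using congrFun h j
  · intro h
    funext x
    simp only [Function.comp_apply, swap_apply_def]
    split_ifs <;> simp [*]

def subtypeApplyEqEquiv {i j : α} (hij : i ≠ j) :
    {f : α → β // f i = f j} ≃ ({k // k ≠ i} → β) where
  toFun f k := f.1 k
  invFun g := ⟨fun k => if h : k = i then g ⟨j, hij.symm⟩ else g ⟨k, h⟩, by simp [hij.symm]⟩
  left_inv f := by
    ext k
    by_cases hk : k = i
    · subst hk; simp [f.2]
    · simp [hk]
  right_inv g := by
    ext ⟨k, hk⟩
    simp [hk]

variable [Fintype α] [DecidableEq β] [Fintype β]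

theorem card_comp_swap_eq_self {i j : α} (hij : i ≠ j) :
    Fintype.card {f : α → β // f ∘ swap i j = f} = Fintype.card β ^ (Fintype.card α - 1) := by
  simp only [comp_swap_eq_self_iff]
  rw [Fintype.card_congr (subtypeApplyEqEquiv hij), Fintype.card_fun, Fintype.card_subtype_compl,
    Fintype.card_subtype_eq]

theorem Equiv.Perm.IsCycle.card_comp_eq_self {σ : Perm α} (hσ : σ.IsCycle)
    (hs : σ.support = .univ) :
    Fintype.card {f : α → β // f ∘ σ = f} = Fintype.card β := by
  obtain ⟨x, -, hx⟩ := hσ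
  refine Fintype.card_congr
    { toFun f := f.1 x
      invFun b := ⟨Function.const α b, Function.const_comp⟩
      left_inv f := Subtype.ext <| funext fun y =>
        (hx (Perm.mem_support.mp (hs ▸ Finset.mem_univ y))).apply_eq_of_comp_eq_self f.2
      right_inv b := rfl }

end FixedFunctions

section PermOp

open PiTensorProduct

variable (N m : ℕ)

theorem permOp_one : permOp N m 1 = LinearMap.id := by
  rw [permOp, Perm.one_def, reindex_refl]
  rfl

theorem permOp_mul (σ τ : Perm (Fin m)) :
    permOp N m (σ * τ) = permOp N m σ ∘ₗ permOp N m τ := by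
  rw [Perm.mul_def, permOp, permOp, permOp, ← reindex_trans]
  rfl

noncomputable def tensorPowerBasis :
    Module.Basis (Fin m → Fin N) ℂ (⨂[ℂ] _ : Fin m, (Fin N → ℂ)) :=
  Basis.piTensorProduct fun _ => Pi.basisFun ℂ (Fin N)

theorem permOp_tensorPowerBasis (σ : Perm (Fin m)) (f : Fin m → Fin N) :
    permOp N m σ (tensorPowerBasis N m f) = tensorPowerBasis N m (f ∘ σ.symm) := by
  simp only [permOp, tensorPowerBasis, Basis.piTensorProduct_apply, LinearEquiv.coe_coe,
    reindex_tprod]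
  rfl

theorem trace_permOp (σ : Perm (Fin m)) :
    LinearMap.trace ℂ _ (permOp N m σ) = Fintype.card {f : Fin m → Fin N // f ∘ σ = f} := by
  rw [LinearMap.trace_eq_matrix_trace ℂ (tensorPowerBasis N m), Matrix.trace]
  simp only [Matrix.diag_apply, LinearMap.toMatrix_apply, permOp_tensorPowerBasis,
    Module.Basis.repr_self, Finsupp.single_apply, Equiv.comp_symm_eq, eq_comm (b := _ ∘ _)]
  rw [Finset.sum_boole, Fintype.card_subtype]

theorem finrank_tensorPower : Module.finrank ℂ (⨂[ℂ] _ : Fin m, (Fin N → ℂ)) = N ^ m := by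
  rw [Module.finrank_eq_card_basis (tensorPowerBasis N m), Fintype.card_fun, Fintype.card_fin,
    Fintype.card_fin]

-- `map_sub` does not fire on this space: `x - y` is typed through the `AddCommGroup` structure
-- of `⨂`, which is not reducibly the `AddCommMonoid` structure the endomorphisms are built on.
theorem trace_tensorPower_sub
    (x y : (⨂[ℂ] _ : Fin m, (Fin N → ℂ)) →ₗ[ℂ] ⨂[ℂ] _ : Fin m, (Fin N → ℂ)) :
    LinearMap.trace ℂ _ (x - y) = LinearMap.trace ℂ _ x - LinearMap.trace ℂ _ y :=
  map_sub _ x y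

theorem trace_permOp_swap {i j : Fin m} (hij : i ≠ j) :
    LinearMap.trace ℂ _ (permOp N m (swap i j)) = (N : ℂ) ^ (m - 1) := by
  rw [trace_permOp, card_comp_swap_eq_self hij, Fintype.card_fin, Fintype.card_fin, Nat.cast_pow]

theorem trace_permOp_of_isCycle {σ : Perm (Fin m)} (hσ : σ.IsCycle) (hs : σ.support = .univ) :
    LinearMap.trace ℂ _ (permOp N m σ) = N := by
  rw [trace_permOp, hσ.card_comp_eq_self hs, Fintype.card_fin]

end PermOp

theorem S12_comp_S12 (N : ℕ) : S12 N ∘ₗ S12 N = S12 N := by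
  have hinv : permOp N 3 (swap 0 1) ∘ₗ permOp N 3 (swap 0 1) = LinearMap.id := by
    rw [← permOp_mul, swap_mul_self, permOp_one]
  simp only [S12, LinearMap.comp_smul, LinearMap.smul_comp, LinearMap.comp_add,
    LinearMap.add_comp, LinearMap.id_comp, LinearMap.comp_id, hinv]
  module

theorem trace_A23_comp_S12 (N : ℕ) :
    LinearMap.trace ℂ _ (A23 N ∘ₗ S12 N) = ((N : ℂ) ^ 3 - N) / 4 := by
  have hcycle : (swap (1 : Fin 3) 2 * swap 0 1).IsCycle :=
    (card_support_eq_three_iff.mp (by decide)).isCycle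
  simp only [A23, S12, LinearMap.comp_smul, LinearMap.smul_comp, LinearMap.comp_add,
    LinearMap.sub_comp, LinearMap.id_comp, LinearMap.comp_id, ← permOp_mul, map_smul, map_add,
    trace_tensorPower_sub, LinearMap.trace_id, finrank_tensorPower, smul_eq_mul,
    trace_permOp_swap N 3 (show (0 : Fin 3) ≠ 1 by decide),
    trace_permOp_swap N 3 (show (1 : Fin 3) ≠ 2 by decide),
    trace_permOp_of_isCycle N 3 hcycle (by decide)]
  push_cast
  ring

theorem trace_mold_mixed_general (N : ℕ) :
    LinearMap.trace ℂ (⨂[ℂ] _ : Fin 3, (Fin N → ℂ))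
        ((4 / 3 : ℂ) • (S12 N ∘ₗ A23 N ∘ₗ S12 N))
      = ((N : ℂ) * ((N : ℂ) ^ 2 - 1)) / 3 := by
  rw [map_smul, LinearMap.trace_comp_comm', LinearMap.comp_assoc, S12_comp_S12,
    trace_A23_comp_S12, smul_eq_mul]
  ring

/-- The trace of the mixed-symmetry MOLD operator `(4/3) S₁₂ A₂₃ S₁₂` on `V^{⊗3}` equals
`N (N² - 1) / 3`, the dimension of the mixed-symmetry representation. -/
theorem trace_mold_mixed (N : ℕ) (hN : 0 < N) :
    LinearMap.trace ℂ (⨂[ℂ] _ : Fin 3, (Fin N → ℂ))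
        ((4 / 3 : ℂ) • (S12 N ∘ₗ A23 N ∘ₗ S12 N))
      = ((N : ℂ) * ((N : ℂ) ^ 2 - 1)) / 3 :=
  trace_mold_mixed_general N
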